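/- Let X be a reversible, irreducible Markov chain with finite state space S. Let x ∈ S and let U ⊆ S be a subset not containing x. Then there exist real numbers a_1, …, a_{|S|} ≥ 0 and λ_1, …, λ_{|S|} ∈ [−1, 1] such that for every integer t ≥ 0, P_x(X_t = x and τ(U) > t) = Σ_{i=1}^{|S|} a_i λ_i^t, where τ(U) = min{s ≥ 0 : X_s ∈ U}. Moreover, if all eigenvalues of the transition matrix of X are non-negative, then the λ_i may be taken in [0, 1]. -/

import Mathlib

open Finset

/-- A (row-)stochastic transition matrix: the transition kernel of a Markov chain
on the finite state space `S`. -/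
def IsStochastic {S : Type*} [Fintype S] (p : Matrix S S ℝ) : Prop :=
  (∀ a b, 0 ≤ p a b) ∧ ∀ a, ∑ b, p a b = 1

/-- `π` is a stationary distribution for the transition matrix `p`. -/
def IsStationaryDistrib {S : Type*} [Fintype S] (p : Matrix S S ℝ) (π : S → ℝ) : Prop :=
  (∀ a, 0 ≤ π a) ∧ (∑ a, π a = 1) ∧ ∀ b, ∑ a, π a * p a b = π b

/-- The chain with transition matrix `p` is reversible with respect to `π`. -/
def IsReversible {S : Type*} [Fintype S] (p : Matrix S S ℝ) (π : S → ℝ) : Prop :=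
  ∀ a b, π a * p a b = π b * p b a

/-- The probability weight of a finite trajectory `z 0, z 1, …, z m` of the chain. -/
noncomputable def pathWeight {S : Type*} (p : Matrix S S ℝ) {m : ℕ} (z : Fin (m + 1) → S) : ℝ :=
  ∏ i : Fin m, p (z i.castSucc) (z i.succ)

open scoped Classical in
/-- `P_x(A)` for an event `A` depending on the trajectory `X_0, X_1, …, X_m`
of the chain started at `x`. -/
noncomputable def eventProb {S : Type*} [Fintype S] (p : Matrix S S ℝ) (x : S) (m : ℕ)
    (A : (Fin (m + 1) → S) → Prop) : ℝ :=
  ∑ z : Fin (m + 1) → S, if z 0 = x ∧ A z then pathWeight p z else 0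

/-- `P_x(τ(y) = t)`: the probability that the chain started at `x` first visits `y`
exactly at time `t`. -/
noncomputable def hitProbEq {S : Type*} [Fintype S] (p : Matrix S S ℝ) (x y : S) (t : ℕ) : ℝ :=
  eventProb p x t fun z => z (Fin.last t) = y ∧ ∀ i : Fin (t + 1), (i : ℕ) < t → z i ≠ y

/-- `P_x(X_t = x, τ(U) > t)`: the chain started at `x` is back at `x` at time `t`
without having visited `U`. -/
noncomputable def avoidReturnProb {S : Type*} [Fintype S] (p : Matrix S S ℝ)
    (x : S) (U : Finset S) (t : ℕ) : ℝ :=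
  eventProb p x t fun z => z (Fin.last t) = x ∧ ∀ i : Fin (t + 1), z i ∉ U

/-!
Kill the chain on `U`: with `q a b = p a b` for `a, b ∉ U` and `0` otherwise,
`P_x(X_t = x, τ(U) > t) = (q ^ t) x x` because `x ∉ U`. Irreducibility makes `π > 0`, and
reversibility makes `M = D q D⁻¹` with `D = diag(√π)` symmetric, so the spectral theorem gives
`(q ^ t) x x = (M ^ t) x x = Σ_i u_{x i}² λ_i ^ t`. The `λ_i` are eigenvalues of the
substochastic matrix `q`, so they lie in `[-1, 1]` by Gershgorin. Finally `M` is the principal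
compression of `D p D⁻¹` to `S \ U`; if the spectrum of `p` is nonnegative, `D p D⁻¹` is
positive semidefinite, hence so is `M`, and the `λ_i` lie in `[0, 1]`.
-/

open Matrix

section paths

variable {S : Type*}

lemma pathWeight_cons (p : Matrix S S ℝ) {m : ℕ} (a : S) (z : Fin (m + 1) → S) :
    pathWeight p (Fin.cons a z : Fin (m + 2) → S) = p a (z 0) * pathWeight p z := by
  simp only [pathWeight, Fin.prod_univ_succ, Fin.castSucc_zero, Fin.cons_zero,
    ← Fin.succ_castSucc, Fin.cons_succ]

lemma pow_apply_eq_eventProb [Fintype S] [DecidableEq S] (p : Matrix S S ℝ) (t : ℕ) (x y : S) :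
    (p ^ t) x y = eventProb p x t fun z => z (Fin.last t) = y := by
  induction t generalizing x with
  | zero =>
    rw [eventProb, ← (Equiv.funUnique (Fin 1) S).symm.sum_comp]
    simp [pathWeight, one_apply, ite_and]
  | succ t ih =>
    rw [pow_succ', mul_apply, eventProb, ← (Fin.consEquiv fun _ => S).sum_comp,
      Fintype.sum_prod_type]
    simp_rw [ih, eventProb, mul_sum, mul_ite, mul_zero]
    rw [sum_comm]
    simp [Fin.consEquiv, pathWeight_cons, ← Fin.succ_last, ite_and]

end paths

section killedOn

variable {S : Type*} [DecidableEq S]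

def killedOn {R : Type*} [Zero R] (U : Finset S) (A : Matrix S S R) : Matrix S S R :=
  Matrix.of fun a b => if a ∈ U ∨ b ∈ U then 0 else A a b

@[simp]
lemma killedOn_apply {R : Type*} [Zero R] (U : Finset S) (A : Matrix S S R) (a b : S) :
    killedOn U A a b = if a ∈ U ∨ b ∈ U then 0 else A a b :=
  rfl

lemma pathWeight_killedOn (U : Finset S) (A : Matrix S S ℝ) {m : ℕ} {z : Fin (m + 1) → S}
    (hz : z 0 ∉ U) :
    pathWeight (killedOn U A) z = if ∀ i, z i ∉ U then pathWeight A z else 0 := by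
  split_ifs with hU
  · exact prod_congr rfl fun i _ => by simp [hU]
  · obtain ⟨i, hi⟩ := not_forall_not.1 hU
    obtain ⟨j, rfl⟩ := Fin.exists_succ_eq.2 (fun h => hz (h ▸ hi))
    exact prod_eq_zero (mem_univ j) (by simp [hi])

lemma avoidReturnProb_eq_killedOn_pow_apply [Fintype S] (p : Matrix S S ℝ) {x : S}
    {U : Finset S} (hxU : x ∉ U) (t : ℕ) :
    avoidReturnProb p x U t = (killedOn U p ^ t) x x := by
  rw [pow_apply_eq_eventProb, avoidReturnProb, eventProb, eventProb]
  refine sum_congr rfl fun z _ => ?_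
  by_cases hz : z 0 = x
  · simp [hz, pathWeight_killedOn U p (hz ▸ hxU), ite_and]
  · simp [hz]

lemma killedOn_nonneg {A : Matrix S S ℝ} (hA : ∀ a b, 0 ≤ A a b) (U : Finset S) (a b : S) :
    0 ≤ killedOn U A a b := by
  rw [killedOn_apply]; split_ifs <;> simp [hA]

lemma killedOn_le {A : Matrix S S ℝ} (hA : ∀ a b, 0 ≤ A a b) (U : Finset S) (a b : S) :
    killedOn U A a b ≤ A a b := by
  rw [killedOn_apply]; split_ifs <;> simp [hA]

lemma Matrix.IsHermitian.killedOn {A : Matrix S S ℝ} (hA : A.IsHermitian) (U : Finset S) :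
    (killedOn U A).IsHermitian := by
  ext a b
  simp [or_comm, ← hA.apply a b]

lemma killedOn_eq_diagonal_mul_mul_diagonal [Fintype S] (U : Finset S) (A : Matrix S S ℝ) :
    killedOn U A = diagonal (fun a => if a ∈ U then 0 else 1) * A *
      diagonal (fun a => if a ∈ U then 0 else 1) := by
  ext a b
  by_cases ha : a ∈ U <;> by_cases hb : b ∈ U <;> simp [ha, hb]

lemma Matrix.PosSemidef.killedOn [Fintype S] {A : Matrix S S ℝ} (hA : A.PosSemidef)
    (U : Finset S) : (killedOn U A).PosSemidef := by
  rw [killedOn_eq_diagonal_mul_mul_diagonal]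
  simpa using hA.conjTranspose_mul_mul_same (diagonal fun a => if a ∈ U then (0 : ℝ) else 1)

end killedOn

section spectrum

variable {n : Type*} [Fintype n] [DecidableEq n]

lemma Matrix.hasEigenvalue_toLin'_iff_isRoot_charpoly {K : Type*} [Field K] (A : Matrix n n K)
    (μ : K) : Module.End.HasEigenvalue (toLin' A) μ ↔ A.charpoly.IsRoot μ := by
  rw [Module.End.hasEigenvalue_iff_isRoot_charpoly, charpoly_toLin']

lemma Matrix.hasEigenvalue_toLin'_map {K L : Type*} [Field K] [Field L] (f : K →+* L)
    {A : Matrix n n K} {μ : K} (h : Module.End.HasEigenvalue (toLin' A) μ) :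
    Module.End.HasEigenvalue (toLin' (A.map f)) (f μ) := by
  rw [hasEigenvalue_toLin'_iff_isRoot_charpoly] at h ⊢
  rw [charpoly_map]
  exact h.map

lemma Matrix.IsHermitian.hasEigenvalue_eigenvalues {A : Matrix n n ℝ} (hA : A.IsHermitian)
    (i : n) : Module.End.HasEigenvalue (toLin' A) (hA.eigenvalues i) := by
  rw [Module.End.hasEigenvalue_iff_mem_spectrum, spectrum_toLin']
  exact hA.eigenvalues_mem_spectrum_real i

lemma abs_le_one_of_hasEigenvalue {A : Matrix n n ℝ} (hA : ∀ a b, 0 ≤ A a b)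
    (hA1 : ∀ a, ∑ b, A a b ≤ 1) {μ : ℝ} (hμ : Module.End.HasEigenvalue (toLin' A) μ) :
    |μ| ≤ 1 := by
  obtain ⟨k, hk⟩ := eigenvalue_mem_ball hμ
  rw [Metric.mem_closedBall, Real.dist_eq] at hk
  have hrow : ∑ j ∈ univ.erase k, ‖A k j‖ = ∑ j, A k j - A k k := by
    rw [← sum_erase_add _ _ (mem_univ k), add_sub_cancel_right]
    exact sum_congr rfl fun j _ => Real.norm_of_nonneg (hA k j)
  have htri := abs_sub_abs_le_abs_sub μ (A k k)
  rw [abs_of_nonneg (hA k k)] at htri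
  linarith [hA1 k]

lemma Matrix.IsHermitian.pow_apply_self {A : Matrix n n ℝ} (hA : A.IsHermitian)
    (t : ℕ) (x : n) :
    (A ^ t) x x = ∑ i, hA.eigenvectorUnitary.val x i ^ 2 * hA.eigenvalues i ^ t := by
  conv_lhs => rw [hA.spectral_theorem, ← map_pow, diagonal_pow]
  rw [Unitary.conjStarAlgAut_apply, mul_apply]
  refine sum_congr rfl fun i _ => ?_
  simp [mul_diagonal]
  ring

lemma Matrix.IsHermitian.exists_pow_apply_self_eq_sum {A : Matrix n n ℝ} (hA : A.IsHermitian)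
    (x : n) {s : Set ℝ} (hs : ∀ i, hA.eigenvalues i ∈ s) :
    ∃ a lam : Fin (Fintype.card n) → ℝ, (∀ i, 0 ≤ a i) ∧ (∀ i, lam i ∈ s) ∧
      ∀ t : ℕ, (A ^ t) x x = ∑ i, a i * lam i ^ t := by
  let e := (Fintype.equivFin n).symm
  refine ⟨fun i => hA.eigenvectorUnitary.val x (e i) ^ 2,
    fun i => hA.eigenvalues (e i), fun i => sq_nonneg _, fun i => hs _, fun t => ?_⟩
  rw [hA.pow_apply_self, ← e.sum_comp]

end spectrum

lemma IsStationaryDistrib.pos {S : Type*} [Fintype S] [DecidableEq S] {p : Matrix S S ℝ}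
    {π : S → ℝ} (hπ : IsStationaryDistrib p π) (hp : ∀ a b, 0 ≤ p a b)
    (hirr : ∀ a b : S, ∃ s : ℕ, 0 < (p ^ s) a b) (b : S) : 0 < π b := by
  obtain ⟨hπ0, hπ1, hπp⟩ := hπ
  have hpow : ∀ s, π ᵥ* (p ^ s) = π := by
    intro s
    induction s with
    | zero => simp
    | succ s ih => rw [pow_succ, ← vecMul_vecMul, ih]; exact funext hπp
  obtain ⟨a, ha⟩ : ∃ a, 0 < π a := by
    by_contra! h
    linarith [sum_nonpos fun a (_ : a ∈ univ) => h a]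
  obtain ⟨s, hs⟩ := hirr a b
  calc 0 < π a * (p ^ s) a b := mul_pos ha hs
    _ ≤ ∑ c, π c * (p ^ s) c b :=
      single_le_sum (fun c _ => mul_nonneg (hπ0 c) (pow_apply_nonneg hp s c b)) (mem_univ a)
    _ = π b := congrFun (hpow s) b

section sqrtConj

variable {S : Type*} [Fintype S] [DecidableEq S] {π : S → ℝ}

noncomputable def sqrtConj (π : S → ℝ) (A : Matrix S S ℝ) : Matrix S S ℝ :=
  diagonal (fun a => √(π a)) * A * diagonal (fun a => (√(π a))⁻¹)

lemma sqrtConj_apply (A : Matrix S S ℝ) (a b : S) :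
    sqrtConj π A a b = √(π a) * A a b / √(π b) := by
  simp [sqrtConj, diagonal_mul, mul_diagonal, div_eq_mul_inv]

lemma exists_units_sqrtConj_eq (hπ : ∀ a, 0 < π a) :
    ∃ u : (Matrix S S ℝ)ˣ, ∀ A, sqrtConj π A = u.val * A * u⁻¹.val := by
  have hne : ∀ a, √(π a) ≠ 0 := fun a => (Real.sqrt_pos.2 (hπ a)).ne'
  exact ⟨⟨diagonal fun a => √(π a), diagonal fun a => (√(π a))⁻¹, by simp [hne],
    by simp [hne]⟩, fun A => rfl⟩

lemma sqrtConj_pow (hπ : ∀ a, 0 < π a) (A : Matrix S S ℝ) (t : ℕ) :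
    sqrtConj π A ^ t = sqrtConj π (A ^ t) := by
  obtain ⟨u, hu⟩ := exists_units_sqrtConj_eq hπ
  rw [hu, hu, Units.conj_pow]

lemma charpoly_sqrtConj (hπ : ∀ a, 0 < π a) (A : Matrix S S ℝ) :
    (sqrtConj π A).charpoly = A.charpoly := by
  obtain ⟨u, hu⟩ := exists_units_sqrtConj_eq hπ
  rw [hu, charpoly_mul_comm, ← mul_assoc, Units.inv_mul, one_mul]

lemma hasEigenvalue_toLin'_sqrtConj_iff (hπ : ∀ a, 0 < π a) (A : Matrix S S ℝ) (μ : ℝ) :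
    Module.End.HasEigenvalue (toLin' (sqrtConj π A)) μ ↔
      Module.End.HasEigenvalue (toLin' A) μ := by
  rw [hasEigenvalue_toLin'_iff_isRoot_charpoly, hasEigenvalue_toLin'_iff_isRoot_charpoly,
    charpoly_sqrtConj hπ]

lemma sqrtConj_apply_self (hπ : ∀ a, 0 < π a) (A : Matrix S S ℝ) (a : S) :
    sqrtConj π A a a = A a a := by
  rw [sqrtConj_apply, mul_div_cancel_left₀ _ (Real.sqrt_pos.2 (hπ a)).ne']

lemma isHermitian_sqrtConj (hπ : ∀ a, 0 ≤ π a) {A : Matrix S S ℝ} (hA : IsReversible A π) :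
    (sqrtConj π A).IsHermitian := by
  ext a b
  simp only [conjTranspose_apply, star_trivial, sqrtConj_apply]
  rcases (hπ a).eq_or_lt with ha | ha
  · simp [← ha]
  rcases (hπ b).eq_or_lt with hb | hb
  · simp [← hb]
  rw [div_eq_div_iff (Real.sqrt_pos.2 ha).ne' (Real.sqrt_pos.2 hb).ne',
    mul_right_comm (√(π a)), mul_right_comm (√(π b)), Real.mul_self_sqrt ha.le,
    Real.mul_self_sqrt hb.le]
  exact (hA a b).symm

lemma sqrtConj_killedOn (U : Finset S) (A : Matrix S S ℝ) :
    sqrtConj π (killedOn U A) = killedOn U (sqrtConj π A) := by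
  ext a b
  by_cases h : a ∈ U ∨ b ∈ U <;> simp [sqrtConj_apply, h]

end sqrtConj

/-- Lemma 14 (spectral decomposition): for a reversible irreducible chain, `x ∉ U`,
there are `a_i ≥ 0` and `λ_i ∈ [-1, 1]` with
`P_x(X_t = x, τ(U) > t) = Σ_i a_i λ_i^t` for all `t`; if all eigenvalues of the
transition matrix are non-negative, the `λ_i` may be taken in `[0, 1]`. -/
theorem spectral_decomposition_avoidReturnProb {S : Type*} [Fintype S] [DecidableEq S]
    (p : Matrix S S ℝ) (π : S → ℝ)
    (hp : IsStochastic p) (hstat : IsStationaryDistrib p π) (hrev : IsReversible p π)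
    (hirr : ∀ a b : S, ∃ s : ℕ, 0 < (p ^ s) a b)
    (x : S) (U : Finset S) (hxU : x ∉ U) :
    (∃ a lam : Fin (Fintype.card S) → ℝ,
        (∀ i, 0 ≤ a i) ∧ (∀ i, lam i ∈ Set.Icc (-1 : ℝ) 1) ∧
          ∀ t : ℕ, avoidReturnProb p x U t = ∑ i, a i * lam i ^ t) ∧
      ((∀ μ : ℂ, Module.End.HasEigenvalue (Matrix.toLin' (p.map Complex.ofReal)) μ →
            ∃ r : ℝ, μ = (r : ℂ) ∧ 0 ≤ r) →
        ∃ a lam : Fin (Fintype.card S) → ℝ,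
          (∀ i, 0 ≤ a i) ∧ (∀ i, lam i ∈ Set.Icc (0 : ℝ) 1) ∧
            ∀ t : ℕ, avoidReturnProb p x U t = ∑ i, a i * lam i ^ t) := by
  obtain ⟨hp0, hp1⟩ := hp
  have hπ : ∀ a, 0 < π a := hstat.pos hp0 hirr
  have hN : (sqrtConj π p).IsHermitian := isHermitian_sqrtConj (fun a => (hπ a).le) hrev
  have hM : (sqrtConj π (killedOn U p)).IsHermitian := sqrtConj_killedOn U p ▸ hN.killedOn U
  have hret : ∀ t, avoidReturnProb p x U t = (sqrtConj π (killedOn U p) ^ t) x x := fun t => by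
    rw [avoidReturnProb_eq_killedOn_pow_apply p hxU, sqrtConj_pow hπ, sqrtConj_apply_self hπ]
  have hM_eig : ∀ i, hM.eigenvalues i ∈ Set.Icc (-1 : ℝ) 1 := fun i =>
    abs_le.1 <| abs_le_one_of_hasEigenvalue (killedOn_nonneg hp0 U)
      (fun a => (sum_le_sum fun b _ => killedOn_le hp0 U a b).trans_eq (hp1 a))
      ((hasEigenvalue_toLin'_sqrtConj_iff hπ _ _).1 (hM.hasEigenvalue_eigenvalues i))
  simp_rw [hret]
  refine ⟨hM.exists_pow_apply_self_eq_sum x hM_eig, fun hp_eig => ?_⟩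
  have hN_psd : (sqrtConj π p).PosSemidef := hN.posSemidef_iff_eigenvalues_nonneg.2 fun i => by
    have h := (hasEigenvalue_toLin'_sqrtConj_iff hπ p _).1 (hN.hasEigenvalue_eigenvalues i)
    obtain ⟨r, hr, hr0⟩ := hp_eig _ (hasEigenvalue_toLin'_map Complex.ofRealHom h)
    exact Complex.ofReal_injective hr ▸ hr0
  have hM_psd : (sqrtConj π (killedOn U p)).PosSemidef :=
    sqrtConj_killedOn U p ▸ hN_psd.killedOn U
  exact hM.exists_pow_apply_self_eq_sum x fun i => ⟨hM_psd.eigenvalues_nonneg i, (hM_eig i).2⟩
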